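/- Let P be a finite set of pairwise distinct keys in {0,1}^256 with |P| ≥ k, fix a key and a natural number l, and let S be the set of the k elements of P with smallest XOR distance to key. If some element of S has common prefix length with key strictly less than l, then every p ∈ P with cpl(p, key) ≥ l belongs to S; in particular, S contains all elements of P with common prefix length at least l with key. -/
import Mathlib

/-- The common prefix length of two keys in `{0,1}^n`: the number of leading bits
(indexed from the most significant bit) on which they agree. -/
def cpl {n : ℕ} (x y : BitVec n) : ℕ :=
  ((List.range n).takeWhile (fun i => x.getMsbD i == y.getMsbD i)).length

/-- The XOR distance between two keys: their bitwise XOR interpreted as a natural number. -/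
def xorDist {n : ℕ} (x y : BitVec n) : ℕ := (x ^^^ y).toNat

private lemma tw1 (p : ℕ → Bool) : ∀ (n s i : ℕ), i < ((List.range' s n).takeWhile p).length → p (s + i) := by
  intro n
  induction n with
  | zero => simp
  | succ m ih =>
    intro s i hi
    rw [List.range'_succ, List.takeWhile_cons] at hi
    by_cases hp : p s
    · rw [if_pos hp, List.length_cons] at hi
      cases i with
      | zero => simpa using hp
      | succ j =>
        have h2 := ih (s+1) j (by omega)
        have e : s + (j+1) = (s+1) + j := by omega
        rw [e]; exact h2
    · rw [if_neg hp] at hi; simp at hi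

private lemma tw2 (p : ℕ → Bool) : ∀ (n s : ℕ), ((List.range' s n).takeWhile p).length < n →
    p (s + ((List.range' s n).takeWhile p).length) = false := by
  intro n
  induction n with
  | zero => simp
  | succ m ih =>
    intro s h
    rw [List.range'_succ, List.takeWhile_cons] at h ⊢
    by_cases hp : p s
    · rw [if_pos hp, List.length_cons] at h ⊢
      have h2 := ih (s+1) (by omega)
      have e : s + (((List.range' (s+1) m).takeWhile p).length + 1)
          = (s+1) + ((List.range' (s+1) m).takeWhile p).length := by omega
      rw [e]; exact h2
    · rw [if_neg hp]
      simpa using hp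

private lemma cpl_le {n : ℕ} (x y : BitVec n) : cpl x y ≤ n := by
  have := (List.takeWhile_sublist (l := List.range n)
    (fun i => x.getMsbD i == y.getMsbD i)).length_le
  simpa [cpl] using this

private lemma cpl_eq {n : ℕ} (x y : BitVec n) {i : ℕ} (hi : i < cpl x y) :
    x.getMsbD i = y.getMsbD i := by
  have := tw1 (fun i => x.getMsbD i == y.getMsbD i) n 0 i
    (by simpa [cpl, List.range_eq_range'] using hi)
  simpa using this

private lemma cpl_ne {n : ℕ} (x y : BitVec n) (h : cpl x y < n) :
    x.getMsbD (cpl x y) ≠ y.getMsbD (cpl x y) := by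
  have := tw2 (fun i => x.getMsbD i == y.getMsbD i) n 0
    (by simpa [cpl, List.range_eq_range'] using h)
  simpa [cpl, List.range_eq_range'] using this

private lemma toNat_lt_of_msb_false {n c : ℕ} (z : BitVec n) (hc : c ≤ n)
    (h : ∀ i < c, z.getMsbD i = false) : z.toNat < 2 ^ (n - c) := by
  apply Nat.lt_pow_two_of_testBit
  intro j hj
  by_cases hjn : j < n
  · have hmsb := h (n - 1 - j) (by omega)
    rw [BitVec.getMsbD_eq_getLsbD] at hmsb
    have e : n - 1 - (n - 1 - j) = j := by omega
    simp only [e, decide_eq_true (by omega : n - 1 - j < n), Bool.true_and] at hmsb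
    exact hmsb
  · exact Nat.testBit_lt_two_pow (lt_of_lt_of_le z.isLt
      (Nat.pow_le_pow_right (by norm_num) (by omega)))

private lemma le_toNat_of_msb_true {n c : ℕ} (z : BitVec n) (hc : c < n)
    (h : z.getMsbD c = true) : 2 ^ (n - 1 - c) ≤ z.toNat := by
  rw [BitVec.getMsbD_eq_getLsbD, decide_eq_true hc, Bool.true_and] at h
  exact Nat.ge_two_pow_of_testBit h

/-- Let `S` be the set of the `k` elements of `P` with smallest XOR distance to `key`
(`S ⊆ P`, `|S| = k`, and every element of `S` is strictly closer to `key` than every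
element of `P \ S`).  If some element of `S` has common prefix length with `key` strictly
less than `l`, then every `p ∈ P` with `cpl(p, key) ≥ l` belongs to `S`. -/
theorem closest_contains_region (P : Finset (BitVec 256)) (k : ℕ) (hPk : k ≤ P.card)
    (key : BitVec 256) (l : ℕ) (S : Finset (BitVec 256)) (hSP : S ⊆ P) (hScard : S.card = k)
    (hclosest : ∀ p ∈ S, ∀ q ∈ P, q ∉ S → xorDist p key < xorDist q key)
    (hex : ∃ q ∈ S, cpl q key < l) :
    ∀ p ∈ P, l ≤ cpl p key → p ∈ S := by
  intro p hp hl
  by_contra hpS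
  obtain ⟨q, hqS, hql⟩ := hex
  have h1 : xorDist q key < xorDist p key := hclosest q hqS p hp hpS
  set cq := cpl q key with hcq
  set cp := cpl p key with hcp
  have hcp256 : cp ≤ 256 := cpl_le p key
  have hcqcp : cq < cp := lt_of_lt_of_le hql hl
  -- upper bound on xorDist p key
  have hub : xorDist p key < 2 ^ (256 - cp) := by
    apply toNat_lt_of_msb_false _ hcp256
    intro i hi
    rw [BitVec.getMsbD_xor, cpl_eq p key hi, Bool.xor_self]
  -- lower bound on xorDist q key
  have hlb : 2 ^ (256 - 1 - cq) ≤ xorDist q key := by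
    apply le_toNat_of_msb_true _ (by omega : cq < 256)
    rw [BitVec.getMsbD_xor]
    have := cpl_ne q key (by omega)
    revert this
    cases q.getMsbD cq <;> cases key.getMsbD cq <;> simp
  have : xorDist p key < xorDist q key := by
    calc xorDist p key < 2 ^ (256 - cp) := hub
      _ ≤ 2 ^ (256 - 1 - cq) := Nat.pow_le_pow_right (by norm_num) (by omega)
      _ ≤ xorDist q key := hlb
  omega
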